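/- Let d ≥ 23 and let G be a simple graph on n vertices with d + 2 ≤ n ≤ d + 6. If G has at least d·n − d(d+1)/2 + 1 edges, then G has a vertex of degree n − 1 (i.e., a vertex adjacent to all other vertices). -/
import Mathlib


/-- Let `d ≥ 23` and let `G` be a simple graph on `n` vertices with
`d + 2 ≤ n ≤ d + 6`. If `G` has at least `d·n − d(d+1)/2 + 1` edges, then `G` has a
vertex of degree `n − 1`, i.e., a vertex adjacent to all other vertices. -/
theorem exists_vertex_of_full_degree
    {V : Type*} [Fintype V] [DecidableEq V]
    (G : SimpleGraph V) [DecidableRel G.Adj]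
    (d n : ℕ) (hd : 23 ≤ d)
    (hcard : Fintype.card V = n)
    (hlow : d + 2 ≤ n) (hhigh : n ≤ d + 6)
    (hedges : d * n - d * (d + 1) / 2 + 1 ≤ G.edgeFinset.card) :
    ∃ v : V, G.degree v = n - 1 := by
  by_contra h
  push_neg at h
  have hdeg : ∀ v : V, G.degree v ≤ n - 2 := by
    intro v
    have h1 : G.degree v < Fintype.card V := G.degree_lt_card_verts v
    have h2 := h v
    omega
  have hsum : ∑ v : V, G.degree v = 2 * G.edgeFinset.card :=
    G.sum_degrees_eq_twice_card_edges
  have hsum2 : ∑ v : V, G.degree v ≤ n * (n - 2) := by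
    calc ∑ v : V, G.degree v ≤ ∑ _v : V, (n - 2) :=
          Finset.sum_le_sum (fun v _ => hdeg v)
      _ = n * (n - 2) := by simp [hcard, mul_comm]
  have hdiv : d * (d + 1) / 2 * 2 = d * (d + 1) :=
    Nat.div_mul_cancel (Even.two_dvd (Nat.even_mul_succ_self d))
  have hA : d * (d + 1) ≤ 2 * (d * n) := by
    have h1 : d + 1 ≤ n := by omega
    nlinarith
  have hE : 2 * (d * n) - d * (d + 1) + 2 ≤ n * (n - 2) := by omega
  obtain ⟨k, hk, hk2, hk6⟩ : ∃ k, n = d + k ∧ 2 ≤ k ∧ k ≤ 6 :=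
    ⟨n - d, by omega, by omega, by omega⟩
  subst hk
  have hsub : d + k - 2 = d + (k - 2) := by omega
  rw [hsub] at hE
  have hE2 : 2 * (d * (d + k)) + 2 ≤ (d + k) * (d + (k - 2)) + d * (d + 1) := by omega
  interval_cases k <;> (norm_num at hE2; nlinarith [hE2])
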